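/- Let Γ₁ ≤ G be a ℤ-cover or a ℤ²-cover and Γ₂ ≤ G any torsion-free non-elementary discrete subgroup; set X₁ = Γ₁\G, X₂ = Γ₂\G. Let φ₁,…,φ_k : X₁ → X₂ be Borel maps, pairwise distinct almost everywhere, Φ(x) = {φ₁(x),…,φ_k(x)}, and let X' ⊂ X₁ be a conull set on which Φ is AU-equivariant (Φ(x a_s u_t) = Φ(x) a_s u_t for all x ∈ X', s,t ∈ ℝ). Suppose there exist a conull set X̃ ⊂ X' and r₀ > 0 such that Φ(x u⁺_r) = Φ(x) u⁺_r for every x ∈ X̃ and every r ∈ (−r₀, r₀) with x u⁺_r ∈ X̃. Then there exists a conull set X'' ⊂ X' such that for all x ∈ X'' and all r ∈ ℝ with x u⁺_r ∈ X'', Φ(x u⁺_r) = Φ(x) u⁺_r. -/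

import Mathlib

open MeasureTheory Matrix
open scoped ENNReal

noncomputable section

/-- `SL(2,ℝ)`. -/
abbrev SL2R : Type := Matrix.SpecialLinearGroup (Fin 2) ℝ

/-- The natural topology on `SL(2,ℝ)`, induced from the space of matrices. -/
instance : TopologicalSpace SL2R :=
  TopologicalSpace.induced (fun g => (g : Matrix (Fin 2) (Fin 2) ℝ)) inferInstance

/-- The Borel σ-algebra on `SL(2,ℝ)`. -/
instance : MeasurableSpace SL2R := borel _

/-- `G = PSL₂(ℝ)`, the quotient of `SL(2,ℝ)` by its center `{±I}`. -/
abbrev PSL : Type := SL2R ⧸ Subgroup.center SL2R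

/-- The image in `PSL₂(ℝ)` of the unipotent matrix `[[1,t],[0,1]]`; `U = {uT t : t ∈ ℝ}`. -/
def uT (t : ℝ) : PSL :=
  QuotientGroup.mk ⟨!![1, t; 0, 1], by simp [Matrix.det_fin_two_of]⟩

/-- The image in `PSL₂(ℝ)` of the diagonal matrix `[[e^{s/2},0],[0,e^{-s/2}]]`;
`A = {aS s : s ∈ ℝ}`. -/
def aS (s : ℝ) : PSL :=
  QuotientGroup.mk ⟨!![Real.exp (s / 2), 0; 0, Real.exp (-(s / 2))], by
    simp [Matrix.det_fin_two_of, ← Real.exp_add]⟩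

/-- The image in `PSL₂(ℝ)` of the lower unipotent matrix `[[1,0],[r,1]]`;
`U⁺ = {uP r : r ∈ ℝ}`. -/
def uP (r : ℝ) : PSL :=
  QuotientGroup.mk ⟨!![1, 0; r, 1], by simp [Matrix.det_fin_two_of]⟩

/-- The right coset space `Γ\G`. -/
abbrev RQ {G : Type*} [Group G] (Γ : Subgroup G) : Type _ :=
  Quotient (QuotientGroup.rightRel Γ)

/-- The canonical projection `G → Γ\G`. -/
def mkRQ {G : Type*} [Group G] (Γ : Subgroup G) (g : G) : RQ Γ := Quotient.mk'' g

/-- The right translation action of `g ∈ G` on `Γ\G`: `Γh ↦ Γhg`. -/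
def rmul {G : Type*} [Group G] {Γ : Subgroup G} (x : RQ Γ) (g : G) : RQ Γ :=
  Quotient.map' (fun h => h * g)
    (fun a b hab => by
      rw [QuotientGroup.rightRel_apply] at hab ⊢
      have h' : b * g * (a * g)⁻¹ = b * a⁻¹ := by group
      rw [h']; exact hab) x

/-- A (right-invariant) Haar measure on `Γ\G`: a nonzero, locally finite Borel measure invariant
under all right translations.  For `Γ` discrete this is the measure `m_Γ`, unique up to scalar. -/
def IsHaarQ {G : Type*} [Group G] [TopologicalSpace G] [MeasurableSpace G] (Γ : Subgroup G)
    (μ : Measure (RQ Γ)) : Prop :=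
  μ ≠ 0 ∧ IsLocallyFiniteMeasure μ ∧ ∀ g : G, Measure.map (fun x => rmul x g) μ = μ

/-- A discrete subgroup of `PSL₂(ℝ)`, assumed (as in the paper) torsion-free and
non-elementary (not virtually cyclic). -/
def IsDiscreteSubgroup (Γ : Subgroup PSL) : Prop :=
  DiscreteTopology ↥Γ ∧ (∀ g : ↥Γ, g ≠ 1 → ¬IsOfFinOrder g) ∧
    ¬∃ H : Subgroup ↥Γ, H.FiniteIndex ∧ ∃ g : ↥Γ, H = Subgroup.zpowers g

/-- A cocompact lattice in `PSL₂(ℝ)`: a discrete subgroup with compact quotient. -/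
def IsCocompactLattice (Γ : Subgroup PSL) : Prop :=
  IsDiscreteSubgroup Γ ∧ CompactSpace (RQ Γ)

/-- `Γ` is a `ℤ^d`-cover: a normal subgroup of a cocompact lattice `Γ'` of `PSL₂(ℝ)` with
`Γ'/Γ ≅ ℤ^d`. -/
def IsZdCover (d : ℕ) (Γ : Subgroup PSL) : Prop :=
  IsDiscreteSubgroup Γ ∧ ∃ Γ' : Subgroup PSL, IsCocompactLattice Γ' ∧ Γ ≤ Γ' ∧
    ∃ f : ↥Γ' →* Multiplicative (Fin d → ℤ), Function.Surjective f ∧ f.ker = Γ.subgroupOf Γ'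

/-- `Γ` is a `ℤ`-cover or a `ℤ²`-cover. -/
def IsZOrZ2Cover (Γ : Subgroup PSL) : Prop := IsZdCover 1 Γ ∨ IsZdCover 2 Γ

/-- The conjugate subgroup `g₀⁻¹ Γ g₀`. -/
def conjSub (g₀ : PSL) (Γ : Subgroup PSL) : Subgroup PSL :=
  Γ.map (MulAut.conj g₀⁻¹).toMonoidHom

/-- The map `(Γ₁ ∩ g₀⁻¹Γ₂g₀)\G → Γ₁\G × Γ₂\G`, `[g] ↦ ([g],[g₀g])`. -/
def coverMap (Γ₁ Γ₂ : Subgroup PSL) (g₀ : PSL) (x : RQ (Γ₁ ⊓ conjSub g₀ Γ₂)) :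
    RQ Γ₁ × RQ Γ₂ :=
  (Quotient.map' id (fun a b hab => by
      rw [QuotientGroup.rightRel_apply] at hab ⊢
      exact (Subgroup.mem_inf.mp hab).1) x,
   Quotient.map' (fun g => g₀ * g) (fun a b hab => by
      rw [QuotientGroup.rightRel_apply] at hab ⊢
      obtain ⟨γ, hγ, hEq⟩ := Subgroup.mem_map.mp (Subgroup.mem_inf.mp hab).2
      have hEq' : b * a⁻¹ = g₀⁻¹ * γ * g₀ := by
        rw [← hEq]; simp [MulAut.conj_apply]
      have hgoal : g₀ * b * (g₀ * a)⁻¹ = γ := by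
        have : g₀ * b * (g₀ * a)⁻¹ = g₀ * (b * a⁻¹) * g₀⁻¹ := by group
        rw [this, hEq']; group
      rw [hgoal]; exact hγ) x)

/-- The diagonal `Δ(U)`-flow on `Z = Γ₁\G × Γ₂\G`. -/
def deltaU {Γ₁ Γ₂ : Subgroup PSL} (t : ℝ) (z : RQ Γ₁ × RQ Γ₂) : RQ Γ₁ × RQ Γ₂ :=
  (rmul z.1 (uT t), rmul z.2 (uT t))

/-- The diagonal right translation by `aS s * uT t ∈ AU` on `Z = Γ₁\G × Γ₂\G`. -/
def deltaAU {Γ₁ Γ₂ : Subgroup PSL} (s t : ℝ) (z : RQ Γ₁ × RQ Γ₂) : RQ Γ₁ × RQ Γ₂ :=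
  (rmul z.1 (aS s * uT t), rmul z.2 (aS s * uT t))

/-- `μ` is a `U`-joining on `Z = Γ₁\G × Γ₂\G` with respect to `(m₁, m₂)`: a locally finite
`Δ(U)`-invariant Borel measure whose pushforwards under the canonical projections are
proportional to `m₁` resp. `m₂`. -/
def IsUJoining (Γ₁ Γ₂ : Subgroup PSL) (m₁ : Measure (RQ Γ₁)) (m₂ : Measure (RQ Γ₂))
    (μ : Measure (RQ Γ₁ × RQ Γ₂)) : Prop :=
  IsLocallyFiniteMeasure μ ∧ (∀ t : ℝ, Measure.map (deltaU t) μ = μ) ∧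
    (∃ c : ℝ≥0∞, c ≠ 0 ∧ c ≠ ⊤ ∧ Measure.map Prod.fst μ = c • m₁) ∧
    (∃ c : ℝ≥0∞, c ≠ 0 ∧ c ≠ ⊤ ∧ Measure.map Prod.snd μ = c • m₂)

/-- `μ` is `Δ(U)`-ergodic: every measurable `Δ(U)`-invariant set is null or conull. -/
def IsDeltaUErgodic {Γ₁ Γ₂ : Subgroup PSL} (μ : Measure (RQ Γ₁ × RQ Γ₂)) : Prop :=
  ∀ s : Set (RQ Γ₁ × RQ Γ₂), MeasurableSet s → (∀ t : ℝ, deltaU t ⁻¹' s = s) →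
    μ s = 0 ∨ μ sᶜ = 0

/-- `μ` is a finite cover self-joining: for some `g₀ ∈ G` with `Γ₁` and `g₀⁻¹Γ₂g₀`
commensurable and some `t₀ ∈ ℝ`, `μ` is proportional to the translate by `(e, uT t₀)` of the
pushforward of the Haar measure of `(Γ₁ ∩ g₀⁻¹Γ₂g₀)\G` under `[g] ↦ ([g],[g₀g])`. -/
def IsFiniteCoverSelfJoining (Γ₁ Γ₂ : Subgroup PSL) (μ : Measure (RQ Γ₁ × RQ Γ₂)) : Prop :=
  ∃ (g₀ : PSL) (t₀ : ℝ) (m₀ : Measure (RQ (Γ₁ ⊓ conjSub g₀ Γ₂))) (c : ℝ≥0∞),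
    Subgroup.Commensurable Γ₁ (conjSub g₀ Γ₂) ∧ IsHaarQ (Γ₁ ⊓ conjSub g₀ Γ₂) m₀ ∧ c ≠ 0 ∧ c ≠ ⊤ ∧
      μ = c • Measure.map (fun z => (z.1, rmul z.2 (uT t₀)))
            (Measure.map (coverMap Γ₁ Γ₂ g₀) m₀)
/-- For `Γ ≤ Γ₀`, the canonical projection `Γ\G → Γ₀\G`. -/
def projRQ {G : Type*} [Group G] {Γ Γ₀ : Subgroup G} (h : Γ ≤ Γ₀) : RQ Γ → RQ Γ₀ :=
  Quotient.map' id (fun a b hab => by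
    rw [QuotientGroup.rightRel_apply] at hab ⊢
    exact h hab)

/-- The set-valued map `Φ(x) = {φ₁(x),…,φ_k(x)}` built from maps `φ i : Γ₁\G → Γ₂\G`. -/
def Phi {Γ₁ Γ₂ : Subgroup PSL} {k : ℕ} (φ : Fin k → RQ Γ₁ → RQ Γ₂) (x : RQ Γ₁) :
    Set (RQ Γ₂) := Set.range fun i => φ i x

/-- A subset `T ⊆ ℝ` is `K`-thick if it meets `[-Kt,-t] ∪ [t,Kt]` for all `t > 0`. -/
def KThick (K : ℝ) (T : Set ℝ) : Prop :=
  ∀ t : ℝ, 0 < t → (T ∩ (Set.Icc (-(K * t)) (-t) ∪ Set.Icc t (K * t))).Nonempty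

section Aux

lemma rmul_mk {G : Type*} [Group G] {Γ : Subgroup G} (a g : G) :
    rmul (Quotient.mk'' a : RQ Γ) g = Quotient.mk'' (a * g) := rfl

lemma rmul_rmul {G : Type*} [Group G] {Γ : Subgroup G} (x : RQ Γ) (g h : G) :
    rmul (rmul x g) h = rmul x (g * h) := by
  induction x using Quotient.inductionOn' with
  | h a => simp [rmul_mk, mul_assoc]

lemma rmul_one' {G : Type*} [Group G] {Γ : Subgroup G} (x : RQ Γ) :
    rmul x (1 : G) = x := by
  induction x using Quotient.inductionOn' with
  | h a => simp [rmul_mk]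

lemma uT_zero : uT 0 = 1 := by
  unfold uT
  rw [← QuotientGroup.mk_one]
  congr 1
  ext i j
  fin_cases i <;> fin_cases j <;> simp [Matrix.one_fin_two]

lemma aS_mul_neg (s : ℝ) : aS s * aS (-s) = 1 := by
  unfold aS
  erw [← QuotientGroup.mk_mul, ← QuotientGroup.mk_one]
  congr 1
  ext i j
  erw [Matrix.SpecialLinearGroup.coe_mul]
  fin_cases i <;> fin_cases j <;>
    simp [Matrix.mul_apply, Fin.sum_univ_two, Matrix.one_fin_two, ← Real.exp_add] <;> ring_nf

lemma aS_mul_uP (s r : ℝ) : aS s * uP (r * Real.exp s) = uP r * aS s := by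
  unfold aS uP
  erw [← QuotientGroup.mk_mul, ← QuotientGroup.mk_mul]
  congr 1
  ext i j
  erw [Matrix.SpecialLinearGroup.coe_mul, Matrix.SpecialLinearGroup.coe_mul]
  fin_cases i <;> fin_cases j <;>
    simp [Matrix.mul_apply, Fin.sum_univ_two, ← Real.exp_add]
  rw [show Real.exp (-(s / 2)) * (r * Real.exp s) = r * (Real.exp (-(s / 2)) * Real.exp s) from
    by ring, ← Real.exp_add]
  ring_nf

end Aux

/-- **Lemma 5.2 (reduction of Theorem 5.1).** If the `AU`-equivariant set-valued map `Φ` is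
`U⁺`-equivariant for small times `r ∈ (-r₀, r₀)` on a conull set `X̃ ⊆ X'`, then it is
`U⁺`-equivariant for all times on a conull set `X'' ⊆ X'`. -/
theorem local_to_global_Uplus_equivariance
    (Γ₁ Γ₂ : Subgroup PSL) (hΓ₁ : IsZOrZ2Cover Γ₁) (hΓ₂ : IsDiscreteSubgroup Γ₂)
    (m₁ : Measure (RQ Γ₁)) (hm₁ : IsHaarQ Γ₁ m₁)
    (k : ℕ) (hk : 0 < k) (φ : Fin k → RQ Γ₁ → RQ Γ₂)
    (hφmeas : ∀ i, Measurable (φ i))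
    (hφdist : ∀ i j : Fin k, i ≠ j → ∀ᵐ x ∂m₁, φ i x ≠ φ j x)
    (X' : Set (RQ Γ₁)) (hX' : m₁ X'ᶜ = 0)
    (hequiv : ∀ x ∈ X', ∀ s t : ℝ,
      Phi φ (rmul x (aS s * uT t)) = (fun y => rmul y (aS s * uT t)) '' Phi φ x)
    (Xt : Set (RQ Γ₁)) (hXt : Xt ⊆ X') (hXtconull : m₁ Xtᶜ = 0)
    (r₀ : ℝ) (hr₀ : 0 < r₀)
    (hloc : ∀ x ∈ Xt, ∀ r : ℝ, -r₀ < r → r < r₀ → rmul x (uP r) ∈ Xt →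
      Phi φ (rmul x (uP r)) = (fun y => rmul y (uP r)) '' Phi φ x) :
    ∃ X'' : Set (RQ Γ₁), X'' ⊆ X' ∧ m₁ X''ᶜ = 0 ∧
      ∀ x ∈ X'', ∀ r : ℝ, rmul x (uP r) ∈ X'' →
        Phi φ (rmul x (uP r)) = (fun y => rmul y (uP r)) '' Phi φ x := by
    classical
  have hnull : ∀ g : PSL, m₁ ((fun x => rmul x g) ⁻¹' Xtᶜ) = 0 := by
    intro g
    obtain ⟨N, hsub, hNmeas, hN0⟩ := exists_measurable_superset_of_null hXtconull
    have hmap := hm₁.2.2 g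
    have hae : AEMeasurable (fun x => rmul x g) m₁ := by
      by_contra h
      rw [Measure.map_of_not_aemeasurable h] at hmap
      exact hm₁.1 hmap.symm
    have hN' : m₁ ((fun x => rmul x g) ⁻¹' N) = 0 := by
      rw [← Measure.map_apply_of_aemeasurable hae hNmeas, hmap]; exact hN0
    exact measure_mono_null (Set.preimage_mono hsub) hN'
  refine ⟨X' ∩ ⋂ n : ℕ, (fun x => rmul x (aS (-(n : ℝ)))) ⁻¹' Xt,
    Set.inter_subset_left, ?_, ?_⟩
  · have hc : (X' ∩ ⋂ n : ℕ, (fun x => rmul x (aS (-(n : ℝ)))) ⁻¹' Xt)ᶜ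
        = X'ᶜ ∪ ⋃ n : ℕ, ((fun x => rmul x (aS (-(n : ℝ)))) ⁻¹' Xt)ᶜ := by
      rw [Set.compl_inter, Set.compl_iInter]
    rw [hc]
    refine measure_union_null hX' (measure_iUnion_null fun n => ?_)
    simpa [Set.preimage_compl] using hnull (aS (-(n : ℝ)))
  · intro x hx r hxy
    obtain ⟨n, hn⟩ : ∃ n : ℕ, |r| * Real.exp (-(n : ℝ)) < r₀ := by
      rcases eq_or_ne r 0 with h0 | h0
      · exact ⟨0, by simpa [h0] using hr₀⟩
      · have hpos : 0 < |r| := abs_pos.mpr h0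
        obtain ⟨n, hn⟩ := exists_nat_gt (-Real.log (r₀ / |r|))
        refine ⟨n, ?_⟩
        have h1 : Real.exp (-(n : ℝ)) < r₀ / |r| := by
          rw [← Real.exp_log (div_pos hr₀ hpos)]
          exact Real.exp_lt_exp.mpr (by linarith)
        calc |r| * Real.exp (-(n : ℝ)) < |r| * (r₀ / |r|) :=
              mul_lt_mul_of_pos_left h1 hpos
          _ = r₀ := by field_simp
    have hxX' : x ∈ X' := hx.1
    have hxt : rmul x (aS (-(n : ℝ))) ∈ Xt := by
      have h2 := hx.2
      rw [Set.mem_iInter] at h2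
      exact h2 n
    have hyt : rmul (rmul x (uP r)) (aS (-(n : ℝ))) ∈ Xt := by
      have h2 := hxy.2
      rw [Set.mem_iInter] at h2
      exact h2 n
    have hkey : rmul (rmul x (aS (-(n : ℝ)))) (uP (r * Real.exp (-(n : ℝ))))
        = rmul (rmul x (uP r)) (aS (-(n : ℝ))) := by
      rw [rmul_rmul, rmul_rmul, aS_mul_uP]
    have hρ : |r * Real.exp (-(n : ℝ))| < r₀ := by
      rw [abs_mul, abs_of_pos (Real.exp_pos _)]; exact hn
    obtain ⟨hρ1, hρ2⟩ := abs_lt.mp hρ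
    have hloc' := hloc (rmul x (aS (-(n : ℝ)))) hxt (r * Real.exp (-(n : ℝ))) hρ1 hρ2
      (hkey ▸ hyt)
    have hequiv1 := hequiv x hxX' (-(n : ℝ)) 0
    rw [uT_zero, mul_one] at hequiv1
    have hequiv2 := hequiv (rmul (rmul x (aS (-(n : ℝ)))) (uP (r * Real.exp (-(n : ℝ)))))
      (hXt (hkey ▸ hyt)) (-(-(n : ℝ))) 0
    rw [uT_zero, mul_one] at hequiv2
    have hpoint : rmul (rmul (rmul x (aS (-(n : ℝ)))) (uP (r * Real.exp (-(n : ℝ)))))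
        (aS (-(-(n : ℝ)))) = rmul x (uP r) := by
      rw [hkey, rmul_rmul, aS_mul_neg, rmul_one']
    calc Phi φ (rmul x (uP r))
        = (fun y => rmul y (aS (-(-(n : ℝ))))) ''
            Phi φ (rmul (rmul x (aS (-(n : ℝ)))) (uP (r * Real.exp (-(n : ℝ))))) := by
          rw [← hpoint]; exact hequiv2
      _ = (fun y => rmul y (aS (-(-(n : ℝ))))) '' ((fun y => rmul y (uP (r * Real.exp (-(n : ℝ))))) ''
            ((fun y => rmul y (aS (-(n : ℝ)))) '' Phi φ x)) := by
          rw [hloc', hequiv1]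
      _ = (fun y => rmul y (uP r)) '' Phi φ x := by
          rw [Set.image_image, Set.image_image]
          apply Set.image_congr'
          intro y
          rw [rmul_rmul, rmul_rmul, ← mul_assoc, aS_mul_uP, mul_assoc, aS_mul_neg, mul_one]
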